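/- arXiv:2510.20717 — 2 statements merged into one kernel-verified Lean document; each statement's English description precedes it below -/
import Mathlib

section
/- Let π₀ = δ₀ (point mass at 0) and let π₁ be a symmetric probability measure on [−δ, δ]. For σ > 0 let P_π denote the Gaussian mixture with density x ↦ ∫ φ_σ(x − v) dπ(v), φ_σ the N(0,σ²) density. Then the chi-squared divergence satisfies χ²(P_{π₁}, P_{δ₀}) ≤ cosh(δ²/σ²) − 1 ≤ exp((δ/σ)⁴/2) − 1. -/
open MeasureTheory ProbabilityTheory

/-- The chi-squared divergence `χ²(Q, P) = ∫ (dQ/dP - 1)² dP`. -/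
noncomputable def chiSq {α : Type*} [MeasurableSpace α] (Q P : Measure α) : ℝ :=
  ∫ x, ((Q.rnDeriv P x).toReal - 1) ^ 2 ∂P

/-! The likelihood ratio of `N(v, σ²)` to `N(0, σ²)` is `L_v(x) = exp ((v x - v²/2) / σ²)`, so the
mixture has density `F = ∫ L_v dπ₁(v)` with respect to `N(0, σ²)`, and `χ² = ∫ F² - 1`. Since
`L_u L_v = exp (u v / σ²) L_{u+v}` and each `L_w` integrates to one, Tonelli gives
`∫ F² = ∬ exp (u v / σ²) dπ₁(u) dπ₁(v)`. Symmetry of `π₁` turns `exp` into `cosh`, which is at most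
`cosh (δ² / σ²)` on the support. -/

open scoped ENNReal NNReal

theorem chiSq_withDensity {α : Type*} [MeasurableSpace α] {P : Measure α} [IsProbabilityMeasure P]
    {f : α → ℝ≥0∞} (hf : Measurable f) [IsProbabilityMeasure (P.withDensity f)]
    (hf_sq : ∫⁻ x, f x ^ 2 ∂P ≠ ∞) :
    chiSq (P.withDensity f) P = (∫⁻ x, f x ^ 2 ∂P).toReal - 1 := by
  have hf_one : ∫⁻ x, f x ∂P = 1 := by
    rw [← setLIntegral_univ, ← withDensity_apply _ MeasurableSet.univ, measure_univ]
  have hf_fin : ∀ᵐ x ∂P, f x < ∞ := ae_lt_top hf (by simp [hf_one])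
  have hf_sq_fin : ∀ᵐ x ∂P, f x ^ 2 < ∞ := hf_fin.mono fun x hx => ENNReal.pow_lt_top hx
  set g := fun x => (f x).toReal
  have hg : Integrable g P :=
    integrable_toReal_of_lintegral_ne_top hf.aemeasurable (by simp [hf_one])
  have hg_sq : Integrable (fun x => g x ^ 2) P := by
    simpa only [g, ENNReal.toReal_pow] using
      integrable_toReal_of_lintegral_ne_top (hf.pow_const 2).aemeasurable hf_sq
  have hg_int : ∫ x, g x ∂P = 1 := by
    rw [integral_toReal hf.aemeasurable hf_fin, hf_one, ENNReal.toReal_one]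
  have hg_sq_int : ∫ x, g x ^ 2 ∂P = (∫⁻ x, f x ^ 2 ∂P).toReal := by
    simp only [g, ← ENNReal.toReal_pow]
    exact integral_toReal (hf.pow_const 2).aemeasurable hf_sq_fin
  calc chiSq (P.withDensity f) P = ∫ x, (g x ^ 2 - 2 * g x + 1) ∂P := by
        refine integral_congr_ae ((Measure.rnDeriv_withDensity P hf).mono fun x hx => ?_)
        simp only [hx, g]
        ring
    _ = ∫ x, g x ^ 2 ∂P - 2 * ∫ x, g x ∂P + 1 := by
        rw [integral_add (f := fun x => g x ^ 2 - 2 * g x) (hg_sq.sub (hg.const_mul 2))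
          (integrable_const 1), integral_sub hg_sq (hg.const_mul 2), integral_const_mul]
        simp
    _ = (∫⁻ x, f x ^ 2 ∂P).toReal - 1 := by rw [hg_sq_int, hg_int]; ring

theorem MeasureTheory.Measure.bind_withDensity {α β : Type*} [MeasurableSpace α] [MeasurableSpace β]
    (μ : Measure α) [SFinite μ] (ν : Measure β) [SFinite ν] {f : β → α → ℝ≥0∞}
    (hf : Measurable (Function.uncurry f)) :
    ν.bind (fun v => μ.withDensity (f v)) = μ.withDensity (fun x => ∫⁻ v, f v x ∂ν) := by
  have hκ : (fun v => μ.withDensity (f v)) = Kernel.withDensity (Kernel.const β μ) f := by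
    ext1 v
    rw [Kernel.withDensity_apply _ hf, Kernel.const_apply]
  ext s hs
  rw [Measure.bind_apply hs (hκ ▸ (Kernel.measurable _).aemeasurable), withDensity_apply _ hs]
  simp_rw [withDensity_apply _ hs]
  exact lintegral_lintegral_swap hf.aemeasurable

theorem ae_abs_le_of_measure_Icc_eq_one {π : Measure ℝ} [IsProbabilityMeasure π] {δ : ℝ}
    (h : π (Set.Icc (-δ) δ) = 1) : ∀ᵐ v ∂π, |v| ≤ δ := by
  have h_mem : ∀ᵐ v ∂π, v ∈ Set.Icc (-δ) δ :=
    mem_ae_iff.mpr ((prob_compl_eq_zero_iff measurableSet_Icc).mpr h)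
  exact h_mem.mono fun _ hv => abs_le.mpr hv

theorem lintegral_exp_mul_eq_lintegral_cosh {π : Measure ℝ} (hπ : π.map (fun x => -x) = π)
    (c : ℝ) : ∫⁻ v, ENNReal.ofReal (Real.exp (c * v)) ∂π
      = ∫⁻ v, ENNReal.ofReal (Real.cosh (c * v)) ∂π := by
  have hm : Measurable fun v => ENNReal.ofReal (Real.exp (c * v)) := by fun_prop
  have h_neg : ∫⁻ v, ENNReal.ofReal (Real.exp (c * v)) ∂π
      = ∫⁻ v, ENNReal.ofReal (Real.exp (-(c * v))) ∂π := by
    conv_lhs => rw [← hπ]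
    rw [lintegral_map hm measurable_neg]
    simp only [mul_neg]
  refine (ENNReal.mul_right_inj two_ne_zero ENNReal.ofNat_ne_top).mp ?_
  calc 2 * ∫⁻ v, ENNReal.ofReal (Real.exp (c * v)) ∂π
      = ∫⁻ v, ENNReal.ofReal (Real.exp (c * v)) + ENNReal.ofReal (Real.exp (-(c * v))) ∂π := by
        rw [lintegral_add_left hm, ← h_neg, two_mul]
    _ = 2 * ∫⁻ v, ENNReal.ofReal (Real.cosh (c * v)) ∂π := by
        rw [← lintegral_const_mul _ (by fun_prop)]
        refine lintegral_congr fun v => ?_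
        rw [← ENNReal.ofReal_add (Real.exp_pos _).le (Real.exp_pos _).le, ← ENNReal.ofReal_ofNat 2,
          ← ENNReal.ofReal_mul zero_le_two, Real.cosh_eq]
        ring_nf

noncomputable def gaussianLikelihoodRatio (t : ℝ≥0) (v x : ℝ) : ℝ :=
  Real.exp ((v * x - v ^ 2 / 2) / t)

section GaussianLikelihoodRatio

variable {t : ℝ≥0}

@[fun_prop]
theorem Measurable.gaussianLikelihoodRatio {α : Type*} [MeasurableSpace α] {f g : α → ℝ}
    (hf : Measurable f) (hg : Measurable g) :
    Measurable fun a => gaussianLikelihoodRatio t (f a) (g a) := by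
  unfold _root_.gaussianLikelihoodRatio
  fun_prop

theorem gaussianLikelihoodRatio_pos (v x : ℝ) : 0 < gaussianLikelihoodRatio t v x :=
  Real.exp_pos _

theorem gaussianPDFReal_eq_mul_gaussianLikelihoodRatio (v x : ℝ) :
    gaussianPDFReal v t x = gaussianPDFReal 0 t x * gaussianLikelihoodRatio t v x := by
  simp only [gaussianPDFReal, gaussianLikelihoodRatio, mul_assoc, ← Real.exp_add]
  congr 2
  ring

theorem gaussianLikelihoodRatio_mul (u v x : ℝ) :
    gaussianLikelihoodRatio t u x * gaussianLikelihoodRatio t v x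
      = Real.exp (u * v / t) * gaussianLikelihoodRatio t (u + v) x := by
  simp only [gaussianLikelihoodRatio, ← Real.exp_add]
  ring_nf

theorem gaussianReal_eq_withDensity_gaussianLikelihoodRatio (ht : t ≠ 0) (v : ℝ) :
    gaussianReal v t = (gaussianReal 0 t).withDensity
      (fun x => ENNReal.ofReal (gaussianLikelihoodRatio t v x)) := by
  rw [gaussianReal_of_var_ne_zero _ ht, gaussianReal_of_var_ne_zero _ ht,
    ← withDensity_mul _ (measurable_gaussianPDF 0 t) (by fun_prop)]
  congr 1
  ext x
  rw [Pi.mul_apply, gaussianPDF, gaussianPDF, ← ENNReal.ofReal_mul (gaussianPDFReal_nonneg _ _ _),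
    gaussianPDFReal_eq_mul_gaussianLikelihoodRatio]

theorem lintegral_gaussianLikelihoodRatio (ht : t ≠ 0) (v : ℝ) :
    ∫⁻ x, ENNReal.ofReal (gaussianLikelihoodRatio t v x) ∂gaussianReal 0 t = 1 := by
  rw [← setLIntegral_univ, ← withDensity_apply _ MeasurableSet.univ,
    ← gaussianReal_eq_withDensity_gaussianLikelihoodRatio ht, measure_univ]

theorem lintegral_gaussianLikelihoodRatio_mul (ht : t ≠ 0) (u v : ℝ) :
    ∫⁻ x, ENNReal.ofReal (gaussianLikelihoodRatio t u x)
        * ENNReal.ofReal (gaussianLikelihoodRatio t v x) ∂gaussianReal 0 t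
      = ENNReal.ofReal (Real.exp (u * v / t)) := by
  simp_rw [← ENNReal.ofReal_mul (gaussianLikelihoodRatio_pos _ _).le, gaussianLikelihoodRatio_mul,
    ENNReal.ofReal_mul (Real.exp_pos _).le]
  rw [lintegral_const_mul _ (by fun_prop), lintegral_gaussianLikelihoodRatio ht, mul_one]

theorem bind_gaussianReal_eq_withDensity (ht : t ≠ 0) (π : Measure ℝ) [SFinite π] :
    π.bind (fun v => gaussianReal v t) = (gaussianReal 0 t).withDensity
      (fun x => ∫⁻ v, ENNReal.ofReal (gaussianLikelihoodRatio t v x) ∂π) := by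
  rw [funext (gaussianReal_eq_withDensity_gaussianLikelihoodRatio ht)]
  exact Measure.bind_withDensity _ _ (by fun_prop)

theorem lintegral_sq_lintegral_gaussianLikelihoodRatio (ht : t ≠ 0) (π : Measure ℝ) [SFinite π] :
    ∫⁻ x, (∫⁻ v, ENNReal.ofReal (gaussianLikelihoodRatio t v x) ∂π) ^ 2 ∂gaussianReal 0 t
      = ∫⁻ w, ENNReal.ofReal (Real.exp (w.1 * w.2 / t)) ∂π.prod π := by
  have h_sq (x : ℝ) : (∫⁻ v, ENNReal.ofReal (gaussianLikelihoodRatio t v x) ∂π) ^ 2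
      = ∫⁻ w, ENNReal.ofReal (gaussianLikelihoodRatio t w.1 x)
          * ENNReal.ofReal (gaussianLikelihoodRatio t w.2 x) ∂π.prod π := by
    rw [sq]
    exact (lintegral_prod_mul (by fun_prop) (by fun_prop)).symm
  simp_rw [h_sq]
  rw [lintegral_lintegral_swap (by fun_prop)]
  simp_rw [lintegral_gaussianLikelihoodRatio_mul ht]

end GaussianLikelihoodRatio

theorem lintegral_prod_exp_mul_div_le_cosh {π : Measure ℝ} [IsProbabilityMeasure π] {δ : ℝ}
    (hsupp : ∀ᵐ v ∂π, |v| ≤ δ) (hsymm : π.map (fun x => -x) = π) (s : ℝ) :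
    ∫⁻ w, ENNReal.ofReal (Real.exp (w.1 * w.2 / s)) ∂π.prod π
      ≤ ENNReal.ofReal (Real.cosh (δ ^ 2 / s)) := by
  rw [lintegral_prod _ (by fun_prop)]
  calc ∫⁻ u, ∫⁻ v, ENNReal.ofReal (Real.exp (u * v / s)) ∂π ∂π
      ≤ ∫⁻ _, ENNReal.ofReal (Real.cosh (δ ^ 2 / s)) ∂π := by
        refine lintegral_mono_ae (hsupp.mono fun u hu => ?_)
        simp_rw [mul_div_right_comm u]
        rw [lintegral_exp_mul_eq_lintegral_cosh hsymm]
        calc ∫⁻ v, ENNReal.ofReal (Real.cosh (u / s * v)) ∂π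
            ≤ ∫⁻ _, ENNReal.ofReal (Real.cosh (δ ^ 2 / s)) ∂π := by
              refine lintegral_mono_ae (hsupp.mono fun v hv => ?_)
              refine ENNReal.ofReal_le_ofReal (Real.cosh_le_cosh.mpr ?_)
              rw [abs_mul, abs_div, abs_div, abs_of_nonneg (sq_nonneg δ), div_mul_eq_mul_div, sq]
              exact div_le_div_of_nonneg_right
                (mul_le_mul hu hv (abs_nonneg v) ((abs_nonneg u).trans hu)) (abs_nonneg s)
          _ = ENNReal.ofReal (Real.cosh (δ ^ 2 / s)) := by simp
    _ = ENNReal.ofReal (Real.cosh (δ ^ 2 / s)) := by simp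

theorem chisq_simple_null_bound_general (δ σ : ℝ) (hσ : 0 < σ)
    (π₁ : Measure ℝ) [IsProbabilityMeasure π₁]
    (hsupp : π₁ (Set.Icc (-δ) δ) = 1)
    (hsymm : π₁.map (fun x => -x) = π₁) :
    chiSq (π₁.bind fun v => gaussianReal v (Real.toNNReal (σ ^ 2)))
        (gaussianReal 0 (Real.toNNReal (σ ^ 2)))
      ≤ Real.cosh (δ ^ 2 / σ ^ 2) - 1 ∧
    Real.cosh (δ ^ 2 / σ ^ 2) - 1 ≤ Real.exp ((δ / σ) ^ 4 / 2) - 1 := by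
  set t := Real.toNNReal (σ ^ 2)
  have ht : t ≠ 0 := by simpa [t] using hσ.ne'
  have htσ : (t : ℝ) = σ ^ 2 := Real.coe_toNNReal _ (sq_nonneg σ)
  have h_second_moment :
      ∫⁻ x, (∫⁻ v, ENNReal.ofReal (gaussianLikelihoodRatio t v x) ∂π₁) ^ 2 ∂gaussianReal 0 t
        ≤ ENNReal.ofReal (Real.cosh (δ ^ 2 / σ ^ 2)) := by
    rw [lintegral_sq_lintegral_gaussianLikelihoodRatio ht, ← htσ]
    exact lintegral_prod_exp_mul_div_le_cosh (ae_abs_le_of_measure_Icc_eq_one hsupp) hsymm _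
  have h_prob : IsProbabilityMeasure (π₁.bind fun v => gaussianReal v t) :=
    isProbabilityMeasure_bind (by fun_prop) (ae_of_all _ fun _ => inferInstance)
  rw [bind_gaussianReal_eq_withDensity ht] at h_prob ⊢
  refine ⟨?_, ?_⟩
  · rw [chiSq_withDensity (by fun_prop) (ne_top_of_le_ne_top ENNReal.ofReal_ne_top h_second_moment)]
    have h := ENNReal.toReal_mono ENNReal.ofReal_ne_top h_second_moment
    rw [ENNReal.toReal_ofReal (Real.cosh_pos _).le] at h
    linarith
  · have h := Real.cosh_le_exp_half_sq (δ ^ 2 / σ ^ 2)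
    rw [show (δ ^ 2 / σ ^ 2) ^ 2 = (δ / σ) ^ 4 by ring] at h
    linarith

theorem chisq_simple_null_bound (δ σ : ℝ) (hδ : 0 ≤ δ) (hσ : 0 < σ)
    (π₁ : Measure ℝ) [IsProbabilityMeasure π₁]
    (hsupp : π₁ (Set.Icc (-δ) δ) = 1)
    (hsymm : π₁.map (fun x => -x) = π₁) :
    chiSq (π₁.bind fun v => gaussianReal v (Real.toNNReal (σ ^ 2)))
        (gaussianReal 0 (Real.toNNReal (σ ^ 2)))
      ≤ Real.cosh (δ ^ 2 / σ ^ 2) - 1 ∧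
    Real.cosh (δ ^ 2 / σ ^ 2) - 1 ≤ Real.exp ((δ / σ) ^ 4 / 2) - 1 :=
  chisq_simple_null_bound_general δ σ hσ π₁ hsupp hsymm
end

section
/- Suppose for a statistical model {P_v : v ∈ ℝ^d} there exist probability measures π₀, π₁ on ℝ^d with π₀(V₀) ≥ 1 − c/4 and π₁(V₁) ≥ 1 − c/4, where c = 1 − (α + β), and the induced mixtures satisfy TV(P_{π₀}, P_{π₁}) < c/2. Then every test ψ with sup_{v∈V₀} P_v(ψ = 1) ≤ α satisfies sup_{v∈V₁} P_v(ψ = 0) > β. -/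
open MeasureTheory

/-- The total variation distance between two measures. -/
noncomputable def tvDist {Ω : Type*} [MeasurableSpace Ω] (Q₀ Q₁ : Measure Ω) : ℝ :=
  ⨆ B : {s : Set Ω // MeasurableSet s}, |(Q₀ B).toReal - (Q₁ B).toReal|

/-! If the test also had type II error at most `β` on `V₁`, its rejection region `R` would have
mixture probability at most `α + c/4` under `π₀` and at least `1 - β - c/4` under `π₁`: a mixture
can exceed a bound that holds on `Vᵢ` only through the mass, at most `c/4`, that its prior puts
outside `Vᵢ`. The two mixtures would then differ by at least `c/2` on `R`, contradicting
`TV < c/2`. -/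

open scoped ENNReal

namespace MeasureTheory

variable {Θ Ω : Type*} [MeasurableSpace Θ] [MeasurableSpace Ω]

lemma abs_measureReal_sub_le_tvDist {Q₀ Q₁ : Measure Ω} [IsFiniteMeasure Q₀] [IsFiniteMeasure Q₁]
    {B : Set Ω} (hB : MeasurableSet B) : |Q₀.real B - Q₁.real B| ≤ tvDist Q₀ Q₁ := by
  refine le_ciSup (f := fun S : {s : Set Ω // MeasurableSet s} => |Q₀.real S - Q₁.real S|)
    ⟨Q₀.real Set.univ + Q₁.real Set.univ, ?_⟩ ⟨B, hB⟩
  rintro _ ⟨S, rfl⟩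
  have h₀ := measureReal_mono (μ := Q₀) (Set.subset_univ S.1)
  have h₁ := measureReal_mono (μ := Q₁) (Set.subset_univ S.1)
  have h₀' : 0 ≤ Q₀.real Set.univ := measureReal_nonneg
  have h₁' : 0 ≤ Q₁.real Set.univ := measureReal_nonneg
  exact abs_sub_le_of_nonneg_of_le measureReal_nonneg (by linarith) measureReal_nonneg
    (by linarith)

variable {π : Measure Θ} [IsProbabilityMeasure π] {P : Θ → Measure Ω}
  [∀ θ, IsProbabilityMeasure (P θ)] {S : Set Ω} {V : Set Θ}

/-- `1 - π V` rather than `π Vᶜ`: for a non-measurable `V` it is the smaller of the two. -/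
lemma bind_apply_le_add_one_sub (hP : Measurable P) (hS : MeasurableSet S) {a : ℝ≥0∞}
    (hV : ∀ θ ∈ V, P θ S ≤ a) : π.bind P S ≤ a + (1 - π V) := by
  set A := {θ | a < P θ S}
  have hA : MeasurableSet A :=
    measurableSet_lt measurable_const ((Measure.measurable_coe hS).comp hP)
  have hπA : π A ≤ 1 - π V := by
    have hVA : V ⊆ Aᶜ := fun θ hθ hθA => (hV θ hθ).not_gt hθA
    refine ENNReal.le_sub_of_add_le_right (measure_ne_top _ _) ?_
    calc π A + π V ≤ π A + π Aᶜ := by gcongr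
      _ = 1 := by rw [measure_add_measure_compl hA, measure_univ]
  have hpointwise (θ : Θ) : P θ S ≤ a + A.indicator 1 θ := by
    by_cases hθ : θ ∈ A
    · simpa [hθ] using prob_le_one.trans le_add_self
    · exact (not_lt.mp hθ).trans le_self_add
  calc π.bind P S = ∫⁻ θ, P θ S ∂π := Measure.bind_apply hS hP.aemeasurable
    _ ≤ ∫⁻ θ, a + A.indicator 1 θ ∂π := lintegral_mono hpointwise
    _ = a + π A := by
      rw [lintegral_add_left measurable_const, lintegral_const, measure_univ, mul_one,
        lintegral_indicator_one hA]
    _ ≤ a + (1 - π V) := by gcongr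

lemma measureReal_bind_le_add_one_sub (hP : Measurable P) (hS : MeasurableSet S) {a : ℝ}
    (ha : 0 ≤ a) (hV : ∀ θ ∈ V, P θ S ≤ ENNReal.ofReal a) :
    (π.bind P).real S ≤ a + (1 - π.real V) := by
  calc (π.bind P).real S ≤ (ENNReal.ofReal a + (1 - π V)).toReal :=
        ENNReal.toReal_mono (by finiteness) (bind_apply_le_add_one_sub hP hS hV)
    _ = a + (1 - π.real V) := by
      rw [ENNReal.toReal_add ENNReal.ofReal_ne_top (by finiteness), ENNReal.toReal_ofReal ha,
        ENNReal.toReal_sub_of_le prob_le_one ENNReal.one_ne_top, ENNReal.toReal_one]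
      rfl

end MeasureTheory

theorem fuzzy_hypotheses_lower_bound_general {Ω : Type*} [MeasurableSpace Ω] (d : ℕ)
    (P : (Fin d → ℝ) → Measure Ω) (hP : Measurable P)
    (hPprob : ∀ v, IsProbabilityMeasure (P v))
    (V₀ V₁ : Set (Fin d → ℝ))
    (π₀ π₁ : Measure (Fin d → ℝ)) [IsProbabilityMeasure π₀] [IsProbabilityMeasure π₁]
    (α β : ℝ) (hα : 0 < α) (hβ : 0 < β)
    (h0 : ENNReal.ofReal (1 - (1 - (α + β)) / 4) ≤ π₀ V₀)
    (h1 : ENNReal.ofReal (1 - (1 - (α + β)) / 4) ≤ π₁ V₁)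
    (htv : tvDist (π₀.bind P) (π₁.bind P) < (1 - (α + β)) / 2)
    (R : Set Ω) (hR : MeasurableSet R)
    (hvalid : ∀ v ∈ V₀, P v R ≤ ENNReal.ofReal α) :
    ENNReal.ofReal β < ⨆ v ∈ V₁, P v Rᶜ := by
  by_contra! hpower
  have hQ₀ := measureReal_bind_le_add_one_sub (π := π₀) hP hR hα.le hvalid
  have hQ₁ := measureReal_bind_le_add_one_sub (π := π₁) hP hR.compl hβ.le
    fun v hv => (le_iSup₂ (f := fun v (_ : v ∈ V₁) => P v Rᶜ) v hv).trans hpower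
  have hπ₀ : 1 - (1 - (α + β)) / 4 ≤ π₀.real V₀ :=
    (ENNReal.ofReal_le_iff_le_toReal (measure_ne_top _ _)).mp h0
  have hπ₁ : 1 - (1 - (α + β)) / 4 ≤ π₁.real V₁ :=
    (ENNReal.ofReal_le_iff_le_toReal (measure_ne_top _ _)).mp h1
  have := isProbabilityMeasure_bind (m := π₀) hP.aemeasurable (ae_of_all _ hPprob)
  have := isProbabilityMeasure_bind (m := π₁) hP.aemeasurable (ae_of_all _ hPprob)
  rw [probReal_compl_eq_one_sub hR] at hQ₁
  have hR_tv := abs_le.mp (abs_measureReal_sub_le_tvDist (Q₀ := π₀.bind P) (Q₁ := π₁.bind P) hR)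
  linarith

theorem fuzzy_hypotheses_lower_bound {Ω : Type*} [MeasurableSpace Ω] (d : ℕ)
    (P : (Fin d → ℝ) → Measure Ω) (hP : Measurable P)
    (hPprob : ∀ v, IsProbabilityMeasure (P v))
    (V₀ V₁ : Set (Fin d → ℝ))
    (π₀ π₁ : Measure (Fin d → ℝ)) [IsProbabilityMeasure π₀] [IsProbabilityMeasure π₁]
    (α β : ℝ) (hα : 0 < α) (hβ : 0 < β) (hαβ : α + β < 1)
    (h0 : ENNReal.ofReal (1 - (1 - (α + β)) / 4) ≤ π₀ V₀)
    (h1 : ENNReal.ofReal (1 - (1 - (α + β)) / 4) ≤ π₁ V₁)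
    (htv : tvDist (π₀.bind P) (π₁.bind P) < (1 - (α + β)) / 2)
    (R : Set Ω) (hR : MeasurableSet R)
    (hvalid : ∀ v ∈ V₀, P v R ≤ ENNReal.ofReal α) :
    ENNReal.ofReal β < ⨆ v ∈ V₁, P v Rᶜ :=
  fuzzy_hypotheses_lower_bound_general d P hP hPprob V₀ V₁ π₀ π₁ α β hα hβ h0 h1 htv R hR hvalid
end
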